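/- arXiv:2005.13416 — 3 statements merged into one kernel-verified Lean document; each statement's English description precedes it below -/
import Mathlib

section
/- The rectangle index does not satisfy depth relevance: there exists a score vector x and a splitting of one of its entries into two positive parts (placed in that race and a newly added race, the result re-sorted in nonincreasing order) such that the rectangle index strictly increases. Concretely, for x = (5, 2), splitting the entry 5 into 3 and 2 yields y = (3, 2, 2) with R(x) = 5 < 6 = R(y), even though both vectors have total sum 7. -/
/-- The Euclidean index of a score vector: `sqrt (∑ i, x i ^ 2)`. -/
noncomputable def euclid {n : ℕ} (x : Fin n → ℝ) : ℝ :=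
  Real.sqrt (∑ i, x i ^ 2)

/-- The rectangle index of a score vector: `max_{1 ≤ i ≤ n} i * x_i`
(here position `i : Fin n` counts as place `i+1`). -/
noncomputable def rect {n : ℕ} (x : Fin n → ℝ) : ℝ :=
  ⨆ i : Fin n, ((i : ℕ) + 1 : ℝ) * x i

lemma rect_eq_of_attained {n : ℕ} (x : Fin n → ℝ) (c : ℝ) (i : Fin n)
    (hi : ((i : ℕ) + 1 : ℝ) * x i = c) (hle : ∀ j : Fin n, ((j : ℕ) + 1 : ℝ) * x j ≤ c) :
    rect x = c := by
  have : Nonempty (Fin n) := ⟨i⟩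
  refine le_antisymm (ciSup_le hle) ?_
  rw [← hi]
  exact le_ciSup (f := fun j : Fin n => ((j : ℕ) + 1 : ℝ) * x j) (Set.finite_range _).bddAbove i

lemma rect_five_two : rect ![(5 : ℝ), 2] = 5 :=
  rect_eq_of_attained _ 5 0 (by norm_num) (by intro j; fin_cases j <;> norm_num)

lemma rect_three_two_two : rect ![(3 : ℝ), 2, 2] = 6 :=
  rect_eq_of_attained _ 6 2 (by norm_num [Matrix.cons_val_two])
    (by intro j; fin_cases j <;> norm_num)

theorem rect_not_depth_relevant :
    rect ![(5 : ℝ), 2] = 5 ∧ rect ![(3 : ℝ), 2, 2] = 6 ∧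
    rect ![(5 : ℝ), 2] < rect ![(3 : ℝ), 2, 2] ∧
    (∑ i, ![(5 : ℝ), 2] i) = 7 ∧ (∑ i, ![(3 : ℝ), 2, 2] i) = 7 := by
  refine ⟨rect_five_two, rect_three_two_two, ?_, ?_, ?_⟩
  · rw [rect_five_two, rect_three_two_two]
    norm_num
  · rw [Fin.sum_univ_two]
    norm_num
  · rw [Fin.sum_univ_three]
    norm_num [Matrix.cons_val_two]
end

section
/- The rectangle index does not satisfy directional consistency: there exist score vectors x, y, d in ℝ^3 with nonnegative entries and a real λ > 1 such that R(x) = R(y) and R(x + d) = R(y + d) but R(x + λ·d) ≠ R(y + λ·d). Concretely, for x = (3, 3, 0), y = (2, 2, 2), d = (1, 0, 0) and λ = 4: R(x) = R(y) = 6 and R(x + d) = R(y + d) = 6, yet R(x + 4d) = 7 ≠ 6 = R(y + 4d). -/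
/- The tail is indexed by `Fin (n + 1)` because a supremum over the empty `Fin 0` is the junk
value `sSup ∅`. -/
theorem Fin.ciSup_succ {α : Type*} [ConditionallyCompleteLinearOrder α] {n : ℕ}
    (f : Fin (n + 2) → α) : ⨆ i, f i = max (f 0) (⨆ i : Fin (n + 1), f i.succ) :=
  le_antisymm
    (ciSup_le <| Fin.cases (le_max_left _ _) fun i =>
      (le_ciSup (Finite.bddAbove_range fun j : Fin (n + 1) => f j.succ) i).trans
        (le_max_right _ _))
    (max_le (le_ciSup (Finite.bddAbove_range f) 0)
      (ciSup_le fun i => le_ciSup (Finite.bddAbove_range f) i.succ))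

theorem rect_fin_three (x : Fin 3 → ℝ) : rect x = max (x 0) (max (2 * x 1) (3 * x 2)) := by
  rw [rect, Fin.ciSup_succ, Fin.ciSup_succ, ciSup_unique (ι := Fin 1)]
  norm_num [Fin.default_eq_zero]

theorem rect_not_directionally_consistent :
    rect ![(3 : ℝ), 3, 0] = 6 ∧ rect ![(2 : ℝ), 2, 2] = 6 ∧
    rect (fun i => ![(3 : ℝ), 3, 0] i + ![(1 : ℝ), 0, 0] i) = 6 ∧
    rect (fun i => ![(2 : ℝ), 2, 2] i + ![(1 : ℝ), 0, 0] i) = 6 ∧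
    rect (fun i => ![(3 : ℝ), 3, 0] i + 4 * ![(1 : ℝ), 0, 0] i) = 7 ∧
    rect (fun i => ![(2 : ℝ), 2, 2] i + 4 * ![(1 : ℝ), 0, 0] i) = 6 ∧
    rect (fun i => ![(3 : ℝ), 3, 0] i + 4 * ![(1 : ℝ), 0, 0] i) ≠
      rect (fun i => ![(2 : ℝ), 2, 2] i + 4 * ![(1 : ℝ), 0, 0] i) := by
  simp only [rect_fin_three]
  norm_num [Matrix.cons_val_two, Matrix.tail_cons]
end

section
/- The Euclidean index does not satisfy uniform equivalence: there exists a score vector x such that no uniform score vector dominated by x has the same Euclidean index as x. Concretely, for x = (2, 1) and any k ∈ {1, 2} and any v ≥ 0 with v ≤ x_i for all i ≤ k, the uniform vector u of length k with all entries equal to v satisfies E(u) = v·sqrt(k) ≤ 2 < sqrt(5) = E(x). -/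
theorem euclid_const {k : ℕ} (v : ℝ) : euclid (fun _ : Fin k => v) = |v| * √k := by
  rw [euclid, Finset.sum_const, Finset.card_univ, Fintype.card_fin, nsmul_eq_mul,
    Real.sqrt_mul (Nat.cast_nonneg k), Real.sqrt_sq_eq_abs, mul_comm]

theorem euclid_two_one : euclid ![(2 : ℝ), 1] = √5 := by
  norm_num [euclid, Fin.sum_univ_two]

theorem euclid_not_uniform_equivalent :
    euclid ![(2 : ℝ), 1] = Real.sqrt 5 ∧
    ∀ k : ℕ, 1 ≤ k → k ≤ 2 →
      ∀ v : ℝ, 0 ≤ v → (∀ i : Fin 2, (i : ℕ) < k → v ≤ ![(2 : ℝ), 1] i) →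
        euclid (fun _ : Fin k => v) = v * Real.sqrt k ∧
        euclid (fun _ : Fin k => v) ≤ 2 ∧
        (2 : ℝ) < euclid ![(2 : ℝ), 1] := by
  refine ⟨euclid_two_one, fun k hk1 hk2 v hv hdom => ?_⟩
  have huniform : euclid (fun _ : Fin k => v) = v * √k := by
    rw [euclid_const, abs_of_nonneg hv]
  refine ⟨huniform, ?_, ?_⟩
  · rw [huniform]
    interval_cases k
    · simpa using hdom 0 (by norm_num)
    · calc v * √2 ≤ 1 * √2 := by gcongr; simpa using hdom 1 (by norm_num)
        _ ≤ 2 := by rw [one_mul, Real.sqrt_le_left (by norm_num)]; norm_num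
  · rw [euclid_two_one, Real.lt_sqrt (by norm_num)]
    norm_num
end
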